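/- arXiv:2102.07873 — 3 statements merged into one kernel-verified Lean document; each statement's English description precedes it below -/
import Mathlib

section
/- For every integer ℓ ≥ 1 and every τ > 0, one has -2ℓ(ℓ+2) + 2(ℓ+1)² cosh(2τ) - 2 cosh((2ℓ+2)τ) < 0. -/
lemma sinh_nmul_ge (τ : ℝ) (hτ : 0 < τ) : ∀ n : ℕ, (n : ℝ) * Real.sinh τ ≤ Real.sinh (n * τ) := by
  intro n
  induction n with
  | zero => simp
  | succ n ih =>
    have h1 : Real.sinh ((n : ℝ) * τ + τ)
        = Real.sinh (n * τ) * Real.cosh τ + Real.cosh (n * τ) * Real.sinh τ :=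
      Real.sinh_add _ _
    have hc1 : 1 ≤ Real.cosh τ := Real.one_le_cosh τ
    have hc2 : 1 ≤ Real.cosh ((n : ℝ) * τ) := Real.one_le_cosh _
    have hs1 : 0 < Real.sinh τ := Real.sinh_pos_iff.mpr hτ
    have hs2 : 0 ≤ Real.sinh ((n : ℝ) * τ) :=
      Real.sinh_nonneg_iff.mpr (by positivity)
    push_cast
    have : Real.sinh (n * τ) + Real.sinh τ ≤ Real.sinh ((n : ℝ) * τ + τ) := by
      rw [h1]; nlinarith
    rw [show ((n:ℝ)+1)*τ = (n:ℝ)*τ+τ from by ring]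
    linarith

lemma sinh_nmul_gt (τ : ℝ) (hτ : 0 < τ) (n : ℕ) (hn : 2 ≤ n) :
    (n : ℝ) * Real.sinh τ < Real.sinh (n * τ) := by
  have hs1 : 0 < Real.sinh τ := Real.sinh_pos_iff.mpr hτ
  have hc1 : 1 < Real.cosh τ := by
    have := Real.cosh_pos (x := τ)
    nlinarith [Real.cosh_sq τ, Real.sinh_pos_iff.mpr hτ]
  have key : Real.sinh (2 * τ) > 2 * Real.sinh τ := by
    rw [Real.sinh_two_mul]; nlinarith
  obtain ⟨k, rfl⟩ := Nat.exists_eq_add_of_le hn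
  have h1 : Real.sinh (((2 + k : ℕ) : ℝ) * τ)
      = Real.sinh (2 * τ) * Real.cosh ((k : ℝ) * τ) +
        Real.cosh (2 * τ) * Real.sinh ((k : ℝ) * τ) := by
    push_cast
    rw [add_mul, Real.sinh_add]
  have hk := sinh_nmul_ge τ hτ k
  have hc2 : 1 ≤ Real.cosh ((k : ℝ) * τ) := Real.one_le_cosh _
  have hc3 : 1 ≤ Real.cosh (2 * τ) := Real.one_le_cosh _
  have hs2 : 0 ≤ Real.sinh ((k : ℝ) * τ) := Real.sinh_nonneg_iff.mpr (by positivity)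
  rw [h1]
  push_cast
  nlinarith

theorem annulus_leading_coefficient_neg (ℓ : ℕ) (hℓ : 1 ≤ ℓ) (τ : ℝ) (hτ : 0 < τ) :
    -2 * (ℓ : ℝ) * ((ℓ : ℝ) + 2) + 2 * ((ℓ : ℝ) + 1) ^ 2 * Real.cosh (2 * τ)
      - 2 * Real.cosh ((2 * (ℓ : ℝ) + 2) * τ) < 0 := by
  have hcosh : ∀ x : ℝ, Real.cosh (2 * x) = 2 * Real.sinh x ^ 2 + 1 := by
    intro x
    rw [Real.cosh_two_mul]
    nlinarith [Real.cosh_sq x]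
  have h2 : (2 * (ℓ : ℝ) + 2) * τ = 2 * (((ℓ + 1 : ℕ) : ℝ) * τ) := by push_cast; ring
  have key : ((ℓ + 1 : ℕ) : ℝ) * Real.sinh τ < Real.sinh ((ℓ + 1 : ℕ) * τ) :=
    sinh_nmul_gt τ hτ (ℓ + 1) (by omega)
  have hs1 : 0 < Real.sinh τ := Real.sinh_pos_iff.mpr hτ
  have hl1 : (1 : ℝ) ≤ (ℓ : ℝ) := by exact_mod_cast hℓ
  rw [h2, hcosh τ, hcosh]
  push_cast at key ⊢
  nlinarith [key, hs1, mul_pos (by linarith : (0:ℝ) < (ℓ:ℝ)+1) hs1]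
end

section
/- Let τ > 0, α ∈ (0,1), and λ₀⁺ = (4/(α(1-α)))·sinh(2τ)/(1 - cosh(2τ) + τ sinh(2τ)). Then λ₀⁺ > 0, and the function u(t) = sinh(2τ)(sinh(2t) - 2t) + (1 - cosh(2τ)) cosh(2t) + 2(1-α)(1 - cosh(2τ) + τ sinh(2τ)) - 1 + cosh(2τ) satisfies: (i) (d²/dt² - 4)(d²/dt²)u = 0 on [0,τ]; (ii) u'(0) = 0 and u'(τ) = 0; (iii) α^{-1} u'''(0) = λ₀⁺ u(0); and (iv) -(1-α)^{-1} u'''(τ) = λ₀⁺ u(τ). -/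
/-!
Every `t ↦ a cosh (ω t) + b sinh (ω t) + c t + d` lies in the kernel of `(∂ₜ² - ω²) ∂ₜ²`, and
differentiation acts on such functions by a linear map of the coefficients, so with `ω = 2`
all claims reduce to evaluating `cosh` and `sinh` at `0` and `τ` (using `cosh² - sinh² = 1`).
Positivity of the eigenvalue comes from
`1 - cosh 2τ + τ sinh 2τ = 2 sinh τ (τ cosh τ - sinh τ)` and `sinh τ < τ cosh τ`.
-/

open Real

noncomputable def coshSinhAffine (ω a b c d : ℝ) (t : ℝ) : ℝ :=
  a * cosh (ω * t) + b * sinh (ω * t) + c * t + d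

theorem hasDerivAt_coshSinhAffine (ω a b c d t : ℝ) :
    HasDerivAt (coshSinhAffine ω a b c d) (coshSinhAffine ω (ω * b) (ω * a) 0 c t) t := by
  have hω : HasDerivAt (fun t : ℝ => ω * t) ω t := by
    simpa using (hasDerivAt_id t).const_mul ω
  have hcosh := ((hasDerivAt_cosh (ω * t)).comp t hω).const_mul a
  have hsinh := ((hasDerivAt_sinh (ω * t)).comp t hω).const_mul b
  have hlin := (hasDerivAt_id t).const_mul c
  exact (((hcosh.add hsinh).add hlin).add_const d).congr_deriv (by simp only [coshSinhAffine]; ring)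

theorem deriv_coshSinhAffine (ω a b c d : ℝ) :
    deriv (coshSinhAffine ω a b c d) = coshSinhAffine ω (ω * b) (ω * a) 0 c :=
  funext fun t => (hasDerivAt_coshSinhAffine ω a b c d t).deriv

theorem iteratedDeriv_coshSinhAffine_two (ω a b c d : ℝ) :
    iteratedDeriv 2 (coshSinhAffine ω a b c d) = coshSinhAffine ω (ω ^ 2 * a) (ω ^ 2 * b) 0 0 := by
  simp only [iteratedDeriv_succ, iteratedDeriv_zero, deriv_coshSinhAffine]
  congr 1 <;> ring

theorem iteratedDeriv_coshSinhAffine_three (ω a b c d : ℝ) :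
    iteratedDeriv 3 (coshSinhAffine ω a b c d) = coshSinhAffine ω (ω ^ 3 * b) (ω ^ 3 * a) 0 0 := by
  rw [iteratedDeriv_succ, iteratedDeriv_coshSinhAffine_two, deriv_coshSinhAffine]
  congr 1 <;> ring

theorem iteratedDeriv_coshSinhAffine_four (ω a b c d : ℝ) :
    iteratedDeriv 4 (coshSinhAffine ω a b c d) = coshSinhAffine ω (ω ^ 4 * a) (ω ^ 4 * b) 0 0 := by
  rw [iteratedDeriv_succ, iteratedDeriv_coshSinhAffine_three, deriv_coshSinhAffine]
  congr 1 <;> ring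

theorem iteratedDeriv_four_sub_sq_mul_iteratedDeriv_two_coshSinhAffine (ω a b c d t : ℝ) :
    iteratedDeriv 4 (coshSinhAffine ω a b c d) t
      - ω ^ 2 * iteratedDeriv 2 (coshSinhAffine ω a b c d) t = 0 := by
  simp only [iteratedDeriv_coshSinhAffine_four, iteratedDeriv_coshSinhAffine_two, coshSinhAffine]
  ring

theorem sinh_lt_mul_cosh {x : ℝ} (hx : 0 < x) : sinh x < x * cosh x := by
  have hmono : StrictMonoOn (fun y : ℝ => y * cosh y - sinh y) (Set.Ici 0) := by
    refine strictMonoOn_of_deriv_pos (convex_Ici 0) (by fun_prop) fun y hy => ?_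
    rw [interior_Ici] at hy
    have hder : HasDerivAt (fun y => y * cosh y - sinh y) (y * sinh y) y :=
      (((hasDerivAt_id' y).mul (hasDerivAt_cosh y)).sub (hasDerivAt_sinh y)).congr_deriv
        (by ring)
    rw [hder.deriv]
    exact mul_pos hy (sinh_pos_iff.mpr hy)
  simpa using hmono Set.self_mem_Ici hx.le hx

theorem one_sub_cosh_two_mul_add_mul_sinh_two_mul_pos {x : ℝ} (hx : 0 < x) :
    0 < 1 - cosh (2 * x) + x * sinh (2 * x) := by
  have hfactor : 1 - cosh (2 * x) + x * sinh (2 * x) = 2 * sinh x * (x * cosh x - sinh x) := by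
    rw [cosh_two_mul, sinh_two_mul]
    linear_combination (-1 : ℝ) * cosh_sq_sub_sinh_sq x
  rw [hfactor]
  exact mul_pos (mul_pos two_pos (sinh_pos_iff.mpr hx)) (sub_pos.mpr (sinh_lt_mul_cosh hx))

theorem annulus_zero_mode_eigenfunction (τ α : ℝ) (hτ : 0 < τ) (hα : α ∈ Set.Ioo (0 : ℝ) 1) :
    let lam : ℝ := (4 / (α * (1 - α))) *
      (Real.sinh (2 * τ) / (1 - Real.cosh (2 * τ) + τ * Real.sinh (2 * τ)))
    let u : ℝ → ℝ := fun t =>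
      Real.sinh (2 * τ) * (Real.sinh (2 * t) - 2 * t)
        + (1 - Real.cosh (2 * τ)) * Real.cosh (2 * t)
        + 2 * (1 - α) * (1 - Real.cosh (2 * τ) + τ * Real.sinh (2 * τ))
        - 1 + Real.cosh (2 * τ)
    0 < lam ∧
      (∀ t ∈ Set.Icc (0 : ℝ) τ, iteratedDeriv 4 u t - 4 * iteratedDeriv 2 u t = 0) ∧
      deriv u 0 = 0 ∧ deriv u τ = 0 ∧
      α⁻¹ * iteratedDeriv 3 u 0 = lam * u 0 ∧
      -(1 - α)⁻¹ * iteratedDeriv 3 u τ = lam * u τ := by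
  intro lam u
  have hD : 0 < 1 - cosh (2 * τ) + τ * sinh (2 * τ) :=
    one_sub_cosh_two_mul_add_mul_sinh_two_mul_pos hτ
  have hsinh : 0 < sinh (2 * τ) := sinh_pos_iff.mpr (by positivity)
  have hα₀ : α ≠ 0 := hα.1.ne'
  have hα₁ : 1 - α ≠ 0 := (sub_pos.mpr hα.2).ne'
  have hu : u = coshSinhAffine 2 (1 - cosh (2 * τ)) (sinh (2 * τ)) (-2 * sinh (2 * τ))
      (2 * (1 - α) * (1 - cosh (2 * τ) + τ * sinh (2 * τ)) - 1 + cosh (2 * τ)) := by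
    funext t; simp only [u, coshSinhAffine]; ring
  rw [hu]
  refine ⟨mul_pos (div_pos four_pos (mul_pos hα.1 (sub_pos.mpr hα.2))) (div_pos hsinh hD),
    fun t _ => by
      convert iteratedDeriv_four_sub_sq_mul_iteratedDeriv_two_coshSinhAffine 2 _ _ _ _ t using 3
      norm_num,
    ?_, ?_, ?_, ?_⟩
  all_goals simp only [deriv_coshSinhAffine, iteratedDeriv_coshSinhAffine_three, coshSinhAffine,
    lam, mul_zero, cosh_zero, sinh_zero]
  · ring
  · ring
  · field_simp; ring
  · field_simp
    linear_combination 4 * sinh (2 * τ) * cosh_sq_sub_sinh_sq (2 * τ)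
end

section
/- Define F(β,τ) = (3/2)·[ sinh(2τ)(1+cosh(2τ))/(cosh(2τ)-1)² - √( sinh²(2τ)(1+cosh(2τ))²/(cosh(2τ)-1)⁴ - 2β(cosh(4τ)-cosh(2τ))/(cosh(2τ)-1)² ) ] · (1 - cosh(2τ) + τ sinh(2τ))/sinh(2τ) for τ > 0 and β ∈ (0, 1/4). Then for each fixed β ∈ (0, 1/4): F(β,τ) → 0 as τ → 0⁺, F(β,τ) → ∞ as τ → ∞, and F(β,·) is continuous on (0,∞); consequently there exist τ⁻, τ⁺, τ* > 0 with F(β,τ⁻) < 1, F(β,τ⁺) > 1, and F(β,τ*) = 1. -/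
/-!
With `u = coth τ`, the half-angle formulas turn `eigenRatioF β τ` into
`(3/2) (u³ - √(u⁶ - β (1 + 3u²))) (τ - tanh τ)`. As `τ → 0⁺`, `u → ∞` and the first factor lies
between `0` and `β (1 + 3u²) / u³ → 0`, while `τ - tanh τ → 0`. As `τ → ∞`, `u → 1`, so the first
factor tends to `(3/2) (1 - √(1 - 4β)) > 0`, while `τ - tanh τ ≥ τ - 1`. The crossing point then
comes from the intermediate value theorem on `(0, ∞)`.
-/

open Filter

/-- The ratio `λ₁⁻/λ₀⁺` of the first `ℓ = 1` eigenvalue to the positive `ℓ = 0`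
eigenvalue of the annulus Paneitz boundary problem, `β = α(1-α)`. -/
noncomputable def eigenRatioF (β τ : ℝ) : ℝ :=
  (3 / 2) *
    (Real.sinh (2 * τ) * (1 + Real.cosh (2 * τ)) / (Real.cosh (2 * τ) - 1) ^ 2
      - Real.sqrt (Real.sinh (2 * τ) ^ 2 * (1 + Real.cosh (2 * τ)) ^ 2
            / (Real.cosh (2 * τ) - 1) ^ 4
          - 2 * β * (Real.cosh (4 * τ) - Real.cosh (2 * τ)) / (Real.cosh (2 * τ) - 1) ^ 2)) *
    ((1 - Real.cosh (2 * τ) + τ * Real.sinh (2 * τ)) / Real.sinh (2 * τ))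

open Set Topology

namespace Real

theorem sub_sqrt_sq_sub_nonneg {a X : ℝ} (ha : 0 ≤ a) (hX : 0 ≤ X) : 0 ≤ a - √(a ^ 2 - X) := by
  rw [sub_nonneg, sqrt_le_left ha]
  linarith

theorem sub_sqrt_sq_sub_le_div {a X : ℝ} (ha : 0 < a) (hX : 0 ≤ X) :
    a - √(a ^ 2 - X) ≤ X / a := by
  rcases le_total (a ^ 2 - X) 0 with h | h
  · rw [sqrt_eq_zero'.mpr h, sub_zero, le_div_iff₀ ha]
    nlinarith
  · have hr : √(a ^ 2 - X) ≤ a := (sqrt_le_left ha.le).mpr (by linarith)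
    rw [le_div_iff₀ ha]
    nlinarith [mul_self_sqrt h, sqrt_nonneg (a ^ 2 - X)]

theorem continuous_tanh : Continuous tanh := by
  simp_rw [funext tanh_eq_sinh_div_cosh]
  exact continuous_sinh.div continuous_cosh fun x => (cosh_pos x).ne'

theorem tendsto_sub_tanh_atTop : Tendsto (fun τ => τ - tanh τ) atTop atTop :=
  tendsto_atTop_mono (fun τ => by dsimp only [id]; linarith [tanh_lt_one τ])
    (tendsto_atTop_add_const_right _ (-1) tendsto_id)

theorem one_le_cosh_div_sinh {τ : ℝ} (hτ : 0 < τ) : 1 ≤ cosh τ / sinh τ :=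
  (one_le_div (sinh_pos_iff.mpr hτ)).mpr (sinh_lt_cosh τ).le

theorem cosh_div_sinh_sq {τ : ℝ} (hτ : 0 < τ) : (cosh τ / sinh τ) ^ 2 = 1 + (sinh τ ^ 2)⁻¹ := by
  have hs : sinh τ ≠ 0 := (sinh_pos_iff.mpr hτ).ne'
  rw [div_pow, cosh_sq']
  field_simp
  ring

theorem tendsto_cosh_div_sinh_nhdsGT_zero :
    Tendsto (fun τ => cosh τ / sinh τ) (𝓝[>] 0) atTop := by
  have hsinh : Tendsto sinh (𝓝[>] 0) (𝓝[>] 0) := by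
    refine tendsto_nhdsWithin_of_tendsto_nhds_of_eventually_within _ ?_ ?_
    · exact (continuous_sinh.tendsto' 0 0 sinh_zero).mono_left nhdsWithin_le_nhds
    · filter_upwards [self_mem_nhdsWithin] with τ hτ using sinh_pos_iff.mpr hτ
  refine tendsto_atTop_mono' _ ?_ (tendsto_inv_nhdsGT_zero.comp hsinh)
  filter_upwards [self_mem_nhdsWithin] with τ hτ
  rw [Function.comp_apply, inv_eq_one_div]
  exact div_le_div_of_nonneg_right (one_le_cosh τ) (sinh_pos_iff.mpr hτ).le

theorem tendsto_cosh_div_sinh_atTop : Tendsto (fun τ => cosh τ / sinh τ) atTop (𝓝 1) := by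
  have hsinh : Tendsto sinh atTop atTop := by
    refine tendsto_atTop_mono' _ ?_ tendsto_id
    filter_upwards [eventually_ge_atTop 0] with τ hτ using self_le_sinh_iff.mpr hτ
  have hupper : Tendsto (fun τ => 1 + (sinh τ ^ 2)⁻¹) atTop (𝓝 1) := by
    simpa using
      (tendsto_inv_atTop_zero.comp ((tendsto_pow_atTop two_ne_zero).comp hsinh)).const_add 1
  refine tendsto_of_tendsto_of_tendsto_of_le_of_le' tendsto_const_nhds hupper ?_ ?_
  · filter_upwards [eventually_gt_atTop 0] with τ hτ using one_le_cosh_div_sinh hτ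
  · filter_upwards [eventually_gt_atTop 0] with τ hτ
    rw [← cosh_div_sinh_sq hτ]
    exact le_self_pow₀ (one_le_cosh_div_sinh hτ) two_ne_zero

theorem continuousOn_cosh_div_sinh : ContinuousOn (fun τ => cosh τ / sinh τ) (Ioi 0) :=
  continuous_cosh.continuousOn.div continuous_sinh.continuousOn
    fun _ hτ => (sinh_pos_iff.mpr hτ).ne'

end Real

open Real

noncomputable def sqrtGap (β u : ℝ) : ℝ := u ^ 3 - √(u ^ 6 - β * (1 + 3 * u ^ 2))

theorem continuous_sqrtGap (β : ℝ) : Continuous (sqrtGap β) := by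
  unfold sqrtGap; fun_prop

theorem sqrtGap_nonneg {β u : ℝ} (hβ : 0 ≤ β) (hu : 0 ≤ u) : 0 ≤ sqrtGap β u := by
  have := sub_sqrt_sq_sub_nonneg (pow_nonneg hu 3) (by positivity : 0 ≤ β * (1 + 3 * u ^ 2))
  rwa [← pow_mul] at this

theorem sqrtGap_le {β u : ℝ} (hβ : 0 ≤ β) (hu : 0 < u) :
    sqrtGap β u ≤ β * (1 + 3 * u ^ 2) / u ^ 3 := by
  have := sub_sqrt_sq_sub_le_div (pow_pos hu 3) (by positivity : 0 ≤ β * (1 + 3 * u ^ 2))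
  rwa [← pow_mul] at this

theorem tendsto_sqrtGap_atTop {β : ℝ} (hβ : 0 ≤ β) : Tendsto (sqrtGap β) atTop (𝓝 0) := by
  have hbound : Tendsto (fun u : ℝ => β * (u⁻¹ ^ 3 + 3 * u⁻¹)) atTop (𝓝 0) := by
    simpa using ((tendsto_inv_atTop_zero.pow 3).add
      (tendsto_inv_atTop_zero.const_mul 3)).const_mul β
  refine tendsto_of_tendsto_of_tendsto_of_le_of_le' tendsto_const_nhds hbound ?_ ?_
  · filter_upwards [eventually_ge_atTop 0] with u hu using sqrtGap_nonneg hβ hu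
  · filter_upwards [eventually_gt_atTop 0] with u hu
    exact (sqrtGap_le hβ hu).trans_eq (by field_simp)

theorem sqrtGap_one_pos {β : ℝ} (hβ : 0 < β) : 0 < sqrtGap β 1 := by
  simp only [sqrtGap, one_pow, sub_pos]
  rw [sqrt_lt' one_pos]
  linarith

theorem eigenRatioF_eq {β τ : ℝ} (hτ : 0 < τ) :
    eigenRatioF β τ = 3 / 2 * sqrtGap β (cosh τ / sinh τ) * (τ - tanh τ) := by
  have hs : sinh τ ≠ 0 := (sinh_pos_iff.mpr hτ).ne'
  have hc : cosh τ ≠ 0 := (cosh_pos τ).ne'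
  have hcs : cosh τ ^ 2 = 1 + sinh τ ^ 2 := cosh_sq' τ
  have hcosh4 : cosh (4 * τ) = cosh (2 * τ) ^ 2 + sinh (2 * τ) ^ 2 := by
    rw [show 4 * τ = 2 * (2 * τ) by ring, cosh_two_mul]
  rw [eigenRatioF, sqrtGap, hcosh4, tanh_eq_sinh_div_cosh, sinh_two_mul, cosh_two_mul]
  have hden : cosh τ ^ 2 + sinh τ ^ 2 - 1 = 2 * sinh τ ^ 2 := by rw [hcs]; ring
  rw [hden]
  congr 4 <;> field_simp
  · rw [hcs]; ring
  · rw [show cosh τ ^ 6 = (cosh τ ^ 2) ^ 3 by ring, hcs]; ring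
  · rw [hcs]; ring

theorem eventuallyEq_eigenRatioF {β : ℝ} {l : Filter ℝ} (hl : Ioi 0 ∈ l) :
    (fun τ => 3 / 2 * sqrtGap β (cosh τ / sinh τ) * (τ - tanh τ)) =ᶠ[l] eigenRatioF β := by
  filter_upwards [hl] with τ hτ using (eigenRatioF_eq hτ).symm

theorem continuousOn_eigenRatioF (β : ℝ) : ContinuousOn (eigenRatioF β) (Ioi 0) := by
  refine ContinuousOn.congr ?_ fun τ hτ => eigenRatioF_eq hτ
  exact (continuousOn_const.mul ((continuous_sqrtGap β).comp_continuousOn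
    continuousOn_cosh_div_sinh)).mul (continuousOn_id.sub continuous_tanh.continuousOn)

theorem tendsto_eigenRatioF_nhdsGT_zero {β : ℝ} (hβ : 0 ≤ β) :
    Tendsto (eigenRatioF β) (𝓝[>] 0) (𝓝 0) := by
  have hgap := (tendsto_sqrtGap_atTop hβ).comp tendsto_cosh_div_sinh_nhdsGT_zero
  have htanh : Tendsto (fun τ => τ - tanh τ) (𝓝[>] 0) (𝓝 0) := by
    have hcont : Continuous fun τ => τ - tanh τ := continuous_id.sub continuous_tanh
    exact (hcont.tendsto' 0 0 (by simp)).mono_left nhdsWithin_le_nhds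
  refine Tendsto.congr' (eventuallyEq_eigenRatioF self_mem_nhdsWithin) ?_
  simpa using (hgap.const_mul (3 / 2)).mul htanh

theorem tendsto_eigenRatioF_atTop {β : ℝ} (hβ : 0 < β) :
    Tendsto (eigenRatioF β) atTop atTop := by
  have hgap := ((continuous_sqrtGap β).tendsto 1).comp tendsto_cosh_div_sinh_atTop
  refine Tendsto.congr' (eventuallyEq_eigenRatioF (Ioi_mem_atTop 0)) ?_
  exact (hgap.const_mul (3 / 2)).pos_mul_atTop (by have := sqrtGap_one_pos hβ; positivity)
    tendsto_sub_tanh_atTop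

theorem eigenRatio_crossing (β : ℝ) (hβ : β ∈ Set.Ioo (0 : ℝ) (1 / 4)) :
    Tendsto (eigenRatioF β) (nhdsWithin 0 (Set.Ioi 0)) (nhds 0) ∧
      Tendsto (eigenRatioF β) atTop atTop ∧
      ContinuousOn (eigenRatioF β) (Set.Ioi 0) ∧
      ∃ τminus τplus τstar : ℝ, 0 < τminus ∧ 0 < τplus ∧ 0 < τstar ∧
        eigenRatioF β τminus < 1 ∧ 1 < eigenRatioF β τplus ∧ eigenRatioF β τstar = 1 := by
  have h0 := tendsto_eigenRatioF_nhdsGT_zero hβ.1.le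
  have hT := tendsto_eigenRatioF_atTop hβ.1
  have hC := continuousOn_eigenRatioF β
  obtain ⟨τminus, hminus, hminus_pos⟩ :=
    ((h0.eventually_lt_const one_pos).and self_mem_nhdsWithin).exists
  obtain ⟨τplus, hplus, hplus_pos⟩ :=
    ((hT.eventually_gt_atTop 1).and (eventually_gt_atTop 0)).exists
  obtain ⟨τstar, hstar_pos, hstar⟩ := isPreconnected_Ioi.intermediate_value_Ioi
    (le_principal_iff.mpr self_mem_nhdsWithin) (le_principal_iff.mpr (Ioi_mem_atTop 0)) hC h0 hT
    (one_pos : (0 : ℝ) < 1)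
  exact ⟨h0, hT, hC, τminus, τplus, τstar, hminus_pos, hplus_pos, hstar_pos, hminus, hplus, hstar⟩
end
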